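/- arXiv:1502.07634 — 6 statements merged into one kernel-verified Lean document; each statement's English description precedes it below -/
import Mathlib

section
/- If there exists an ALC morphism μ : Δ^I → Δ^{I'} between Σ-models I and I', then for all concept descriptions C and D, if I' satisfies the GCI C ⊑ D (i.e. C^{I'} ⊆ D^{I'}) then I satisfies C ⊑ D (i.e. C^I ⊆ D^I). -/
/-- ALC concept descriptions over concept names `NC` and role names `NR`. -/
inductive ALCConcept (NC NR : Type) : Type
  | bot : ALCConcept NC NR
  | top : ALCConcept NC NR
  | atom : NC → ALCConcept NC NR
  | inf : ALCConcept NC NR → ALCConcept NC NR → ALCConcept NC NR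
  | sup : ALCConcept NC NR → ALCConcept NC NR → ALCConcept NC NR
  | compl : ALCConcept NC NR → ALCConcept NC NR
  | all : NR → ALCConcept NC NR → ALCConcept NC NR
  | ex : NR → ALCConcept NC NR → ALCConcept NC NR

/-- A Σ-model: nonempty carrier, interpretation of concept and role names. -/
structure ALCModel (NC NR : Type) : Type 1 where
  Δ : Type
  nonempty : Nonempty Δ
  ic : NC → Set Δ
  ir : NR → Set (Δ × Δ)

/-- Standard ALC evaluation of a concept in a model. -/
def ALCModel.eval {NC NR : Type} (I : ALCModel NC NR) : ALCConcept NC NR → Set I.Δ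
  | .bot => ∅
  | .top => Set.univ
  | .atom c => I.ic c
  | .inf C D => I.eval C ∩ I.eval D
  | .sup C D => I.eval C ∪ I.eval D
  | .compl C => (I.eval C)ᶜ
  | .all r C => {x | ∀ y, (x, y) ∈ I.ir r → y ∈ I.eval C}
  | .ex r C => {x | ∃ y, (x, y) ∈ I.ir r ∧ y ∈ I.eval C}

/-- Satisfaction of a GCI `C ⊑ D`. -/
def ALCModel.Sat {NC NR : Type} (I : ALCModel NC NR) (C D : ALCConcept NC NR) : Prop :=
  I.eval C ⊆ I.eval D

/-- ALC morphism (functional bisimulation) between models. -/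
def IsMorphism {NC NR : Type} (I I' : ALCModel NC NR) (μ : I.Δ → I'.Δ) : Prop :=
  (∀ c a, a ∈ I.ic c ↔ μ a ∈ I'.ic c) ∧
  (∀ r a b, (a, b) ∈ I.ir r → (μ a, μ b) ∈ I'.ir r) ∧
  (∀ r a a', (μ a, a') ∈ I'.ir r → ∃ b, (a, b) ∈ I.ir r ∧ μ b = a')

lemma morphism_eval {NC NR : Type} {I I' : ALCModel NC NR} {μ : I.Δ → I'.Δ}
    (hμ : IsMorphism I I' μ) (C : ALCConcept NC NR) :
    ∀ a, a ∈ I.eval C ↔ μ a ∈ I'.eval C := by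
  obtain ⟨h1, h2, h3⟩ := hμ
  induction C with
  | bot => intro a; simp [ALCModel.eval]
  | top => intro a; simp [ALCModel.eval]
  | atom c => intro a; exact h1 c a
  | inf C D ihC ihD => intro a; simp [ALCModel.eval, ihC a, ihD a]
  | sup C D ihC ihD => intro a; simp [ALCModel.eval, ihC a, ihD a]
  | compl C ihC => intro a; simp [ALCModel.eval, ihC a]
  | all r C ihC =>
    intro a
    constructor
    · intro hx y hy
      obtain ⟨b, hb, rfl⟩ := h3 r a y hy
      exact (ihC b).1 (hx b hb)
    · intro hx y hy
      exact (ihC y).2 (hx (μ y) (h2 r a y hy))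
  | ex r C ihC =>
    intro a
    constructor
    · rintro ⟨y, hy, hyC⟩
      exact ⟨μ y, h2 r a y hy, (ihC y).1 hyC⟩
    · rintro ⟨y, hy, hyC⟩
      obtain ⟨b, hb, rfl⟩ := h3 r a y hy
      exact ⟨b, hb, (ihC b).2 hyC⟩

theorem morphism_reflects_gci {NC NR : Type} (I I' : ALCModel NC NR)
    (h : ∃ μ : I.Δ → I'.Δ, IsMorphism I I' μ) :
    ∀ C D : ALCConcept NC NR, I'.Sat C D → I.Sat C D := by
  obtain ⟨μ, hμ⟩ := h
  intro C D hsat a ha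
  exact (morphism_eval hμ D a).2 (hsat ((morphism_eval hμ C a).1 ha))
end

section
/- For a finite signature Σ and a finite Σ-model I, the set GCI({I}) of all general concept inclusions C ⊑ D holding in I is finitely based: there exists a finite set T of GCIs with T ⊆ GCI({I}) (soundness) and such that every GCI in GCI({I}) is a semantical consequence of T (completeness). -/
/-- `C ⊑ D` is a semantical consequence of the set of GCIs `T`. -/
def Consequence {NC NR : Type} (T : Set (ALCConcept NC NR × ALCConcept NC NR))
    (C D : ALCConcept NC NR) : Prop :=
  ∀ J : ALCModel NC NR, (∀ φ ∈ T, J.Sat φ.1 φ.2) → J.Sat C D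

section Aux

open Classical

variable {NC NR : Type}

/-- Finite conjunction of a list of concepts. -/
def infL (l : List (ALCConcept NC NR)) : ALCConcept NC NR :=
  l.foldr .inf .top

/-- Finite disjunction of a list of concepts. -/
def supL (l : List (ALCConcept NC NR)) : ALCConcept NC NR :=
  l.foldr .sup .bot

lemma mem_eval_infL (J : ALCModel NC NR) (l : List (ALCConcept NC NR)) (x : J.Δ) :
    x ∈ J.eval (infL l) ↔ ∀ C ∈ l, x ∈ J.eval C := by
  induction l with
  | nil => simp [infL, ALCModel.eval]
  | cons C l ih =>
    simp only [infL, List.foldr_cons, ALCModel.eval, Set.mem_inter_iff, List.mem_cons] at *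
    constructor
    · rintro ⟨h1, h2⟩ D (rfl | hD)
      · exact h1
      · exact ih.1 h2 D hD
    · intro h
      exact ⟨h C (Or.inl rfl), ih.2 fun D hD => h D (Or.inr hD)⟩

lemma mem_eval_supL (J : ALCModel NC NR) (l : List (ALCConcept NC NR)) (x : J.Δ) :
    x ∈ J.eval (supL l) ↔ ∃ C ∈ l, x ∈ J.eval C := by
  induction l with
  | nil => simp [supL, ALCModel.eval]
  | cons C l ih =>
    simp only [supL, List.foldr_cons, ALCModel.eval, Set.mem_union, List.mem_cons] at *
    constructor
    · rintro (h | h)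
      · exact ⟨C, Or.inl rfl, h⟩
      · obtain ⟨D, hD, hx⟩ := ih.1 h
        exact ⟨D, Or.inr hD, hx⟩
    · rintro ⟨D, (rfl | hD), hx⟩
      · exact Or.inl hx
      · exact Or.inr (ih.2 ⟨D, hD, hx⟩)

/-- The list of `r`-successors of `a` in `I`. -/
noncomputable def succList (I : ALCModel NC NR) [Fintype I.Δ] (a : I.Δ) (r : NR) :
    List I.Δ :=
  (Finset.univ : Finset I.Δ).toList.filter (fun b => decide ((a, b) ∈ I.ir r))

lemma mem_succList (I : ALCModel NC NR) [Fintype I.Δ] (a b : I.Δ) (r : NR) :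
    b ∈ succList I a r ↔ (a, b) ∈ I.ir r := by
  simp [succList]

/-- Conjunction of all literals holding at `a` in `I`. -/
noncomputable def litC (I : ALCModel NC NR) [Fintype NC] (a : I.Δ) :
    ALCConcept NC NR :=
  infL ((Finset.univ : Finset NC).toList.map fun c =>
    if a ∈ I.ic c then .atom c else .compl (.atom c))

lemma eval_litC (I : ALCModel NC NR) [Fintype NC] (a : I.Δ) (J : ALCModel NC NR)
    (x : J.Δ) : x ∈ J.eval (litC I a) ↔ ∀ c, (x ∈ J.ic c ↔ a ∈ I.ic c) := by
  rw [litC, mem_eval_infL]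
  constructor
  · intro h c
    have := h _ (List.mem_map.2 ⟨c, by simp, rfl⟩)
    by_cases hc : a ∈ I.ic c <;> simp [hc, ALCModel.eval] at this <;> simp [hc, this]
  · intro h C hC
    obtain ⟨c, -, rfl⟩ := List.mem_map.1 hC
    by_cases hc : a ∈ I.ic c <;> simp [hc, ALCModel.eval, (h c)]

variable (I : ALCModel NC NR) [Fintype NC] [Fintype NR] [Fintype I.Δ]

/-- `k`-th characteristic concept of the element `a` of `I`. -/
noncomputable def chi : ℕ → I.Δ → ALCConcept NC NR
  | 0, a => litC I a
  | k+1, a => .inf (litC I a) (infL ((Finset.univ : Finset NR).toList.map fun r =>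
      .inf (infL ((succList I a r).map fun b => .ex r (chi k b)))
           (.all r (supL ((succList I a r).map fun b => chi k b)))))

lemma mem_chi_succ (J : ALCModel NC NR) (x : J.Δ) (a : I.Δ) (k : ℕ) :
    x ∈ J.eval (chi I (k+1) a) ↔
      (∀ c, (x ∈ J.ic c ↔ a ∈ I.ic c)) ∧
      ∀ r, (∀ b, (a, b) ∈ I.ir r → ∃ y, (x, y) ∈ J.ir r ∧ y ∈ J.eval (chi I k b)) ∧
           (∀ y, (x, y) ∈ J.ir r → ∃ b, (a, b) ∈ I.ir r ∧ y ∈ J.eval (chi I k b)) := by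
  rw [chi]
  show x ∈ J.eval (.inf _ _) ↔ _
  rw [show ∀ A B, J.eval (ALCConcept.inf A B) = J.eval A ∩ J.eval B from fun _ _ => rfl]
  rw [Set.mem_inter_iff, eval_litC, mem_eval_infL]
  apply and_congr_right'
  constructor
  · intro h r
    have := h _ (List.mem_map.2 ⟨r, by simp, rfl⟩)
    rw [show ∀ A B, J.eval (ALCConcept.inf A B) = J.eval A ∩ J.eval B from fun _ _ => rfl,
      Set.mem_inter_iff, mem_eval_infL] at this
    obtain ⟨h1, h2⟩ := this
    constructor
    · intro b hb
      have := h1 _ (List.mem_map.2 ⟨b, (mem_succList I a b r).2 hb, rfl⟩)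
      exact this
    · intro y hy
      have h2' : ∀ y, (x, y) ∈ J.ir r → y ∈ J.eval (supL ((succList I a r).map fun b => chi I k b)) := h2
      have := (mem_eval_supL J _ y).1 (h2' y hy)
      obtain ⟨C, hC, hyC⟩ := this
      obtain ⟨b, hb, rfl⟩ := List.mem_map.1 hC
      exact ⟨b, (mem_succList I a b r).1 hb, hyC⟩
  · intro h C hC
    obtain ⟨r, -, rfl⟩ := List.mem_map.1 hC
    obtain ⟨h1, h2⟩ := h r
    rw [show ∀ A B, J.eval (ALCConcept.inf A B) = J.eval A ∩ J.eval B from fun _ _ => rfl,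
      Set.mem_inter_iff, mem_eval_infL]
    constructor
    · intro C hC
      obtain ⟨b, hb, rfl⟩ := List.mem_map.1 hC
      obtain ⟨y, hy, hyb⟩ := h1 b ((mem_succList I a b r).1 hb)
      exact ⟨y, hy, hyb⟩
    · show ∀ y, (x, y) ∈ J.ir r → _
      intro y hy
      obtain ⟨b, hb, hyb⟩ := h2 y hy
      exact (mem_eval_supL J _ y).2 ⟨chi I k b, List.mem_map.2 ⟨b, (mem_succList I a b r).2 hb, rfl⟩, hyb⟩

lemma chi_imp_lit (J : ALCModel NC NR) (x : J.Δ) (a : I.Δ) (k : ℕ)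
    (h : x ∈ J.eval (chi I k a)) : ∀ c, (x ∈ J.ic c ↔ a ∈ I.ic c) := by
  cases k with
  | zero => exact (eval_litC I a J x).1 h
  | succ k => exact ((mem_chi_succ I J x a k).1 h).1

/-- Monotonicity: `chi (k+1)` implies `chi k`, in any model. -/
lemma chi_mono : ∀ (k : ℕ) (J : ALCModel NC NR) (x : J.Δ) (a : I.Δ),
    x ∈ J.eval (chi I (k+1) a) → x ∈ J.eval (chi I k a) := by
  intro k
  induction k with
  | zero =>
    intro J x a h
    exact (eval_litC I a J x).2 (chi_imp_lit I J x a 1 h)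
  | succ k ih =>
    intro J x a h
    rw [mem_chi_succ] at h ⊢
    refine ⟨h.1, fun r => ⟨?_, ?_⟩⟩
    · intro b hb
      obtain ⟨y, hy, hyb⟩ := (h.2 r).1 b hb
      exact ⟨y, hy, ih J y b hyb⟩
    · intro y hy
      obtain ⟨b, hb, hyb⟩ := (h.2 r).2 y hy
      exact ⟨b, hb, ih J y b hyb⟩

lemma chi_mono' (J : ALCModel NC NR) (x : J.Δ) (a : I.Δ) :
    ∀ (d i : ℕ), x ∈ J.eval (chi I (i + d) a) → x ∈ J.eval (chi I i a) := by
  intro d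
  induction d with
  | zero => exact fun i h => h
  | succ d ih =>
    intro i h
    exact ih i (chi_mono I (i + d) J x a h)

lemma chi_mono'' (J : ALCModel NC NR) (x : J.Δ) (a : I.Δ) {i j : ℕ} (hij : i ≤ j)
    (h : x ∈ J.eval (chi I j a)) : x ∈ J.eval (chi I i a) := by
  obtain ⟨d, rfl⟩ := Nat.exists_eq_add_of_le hij
  exact chi_mono' I J x a d i h

/-- Reflexivity: `a` satisfies its own characteristic concept. -/
lemma chi_refl : ∀ (k : ℕ) (a : I.Δ), a ∈ I.eval (chi I k a) := by
  intro k
  induction k with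
  | zero => intro a; exact (eval_litC I a I a).2 fun c => Iff.rfl
  | succ k ih =>
    intro a
    rw [mem_chi_succ]
    exact ⟨fun c => Iff.rfl, fun r =>
      ⟨fun b hb => ⟨b, hb, ih b⟩, fun y hy => ⟨y, hy, ih y⟩⟩⟩

/-- Modal rank of a concept. -/
def rank : ALCConcept NC NR → ℕ
  | .bot => 0
  | .top => 0
  | .atom _ => 0
  | .inf C D => max (rank C) (rank D)
  | .sup C D => max (rank C) (rank D)
  | .compl C => rank C
  | .all _ C => rank C + 1
  | .ex _ C => rank C + 1

/-- Agreement: if `x ∈ χ_a^k` and `rank C ≤ k`, then `x` and `a` agree on `C`. -/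
lemma chi_agree : ∀ (C : ALCConcept NC NR) (k : ℕ), rank C ≤ k →
    ∀ (J : ALCModel NC NR) (x : J.Δ) (a : I.Δ), x ∈ J.eval (chi I k a) →
      (x ∈ J.eval C ↔ a ∈ I.eval C) := by
  intro C
  induction C with
  | bot => intro k _ J x a _; simp [ALCModel.eval]
  | top => intro k _ J x a _; simp [ALCModel.eval]
  | atom c => intro k _ J x a h; exact chi_imp_lit I J x a k h c
  | inf C D ihC ihD =>
    intro k hk J x a h
    rw [show ∀ (K : ALCModel NC NR) A B, K.eval (ALCConcept.inf A B) = K.eval A ∩ K.eval B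
      from fun _ _ _ => rfl, show ∀ (K : ALCModel NC NR) A B,
      K.eval (ALCConcept.inf A B) = K.eval A ∩ K.eval B from fun _ _ _ => rfl]
    rw [Set.mem_inter_iff, Set.mem_inter_iff,
      ihC k (le_trans (le_max_left _ _) hk) J x a h,
      ihD k (le_trans (le_max_right _ _) hk) J x a h]
  | sup C D ihC ihD =>
    intro k hk J x a h
    rw [show ∀ (K : ALCModel NC NR) A B, K.eval (ALCConcept.sup A B) = K.eval A ∪ K.eval B
      from fun _ _ _ => rfl, show ∀ (K : ALCModel NC NR) A B,
      K.eval (ALCConcept.sup A B) = K.eval A ∪ K.eval B from fun _ _ _ => rfl]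
    rw [Set.mem_union, Set.mem_union,
      ihC k (le_trans (le_max_left _ _) hk) J x a h,
      ihD k (le_trans (le_max_right _ _) hk) J x a h]
  | compl C ihC =>
    intro k hk J x a h
    rw [show ∀ (K : ALCModel NC NR) A, K.eval (ALCConcept.compl A) = (K.eval A)ᶜ
      from fun _ _ => rfl, show ∀ (K : ALCModel NC NR) A,
      K.eval (ALCConcept.compl A) = (K.eval A)ᶜ from fun _ _ => rfl]
    rw [Set.mem_compl_iff, Set.mem_compl_iff, ihC k hk J x a h]
  | all r C ihC =>
    intro k hk J x a h
    obtain ⟨m, rfl⟩ : ∃ m, k = m + 1 := ⟨k - 1, by have : rank (.all r C) = rank C + 1 := rfl; omega⟩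
    have hm : rank C ≤ m := by have : rank (.all r C) = rank C + 1 := rfl; omega
    rw [mem_chi_succ] at h
    show (∀ y, (x, y) ∈ J.ir r → y ∈ J.eval C) ↔ (∀ b, (a, b) ∈ I.ir r → b ∈ I.eval C)
    constructor
    · intro hx b hb
      obtain ⟨y, hy, hyb⟩ := (h.2 r).1 b hb
      exact (ihC m hm J y b hyb).1 (hx y hy)
    · intro ha y hy
      obtain ⟨b, hb, hyb⟩ := (h.2 r).2 y hy
      exact (ihC m hm J y b hyb).2 (ha b hb)
  | ex r C ihC =>
    intro k hk J x a h
    obtain ⟨m, rfl⟩ : ∃ m, k = m + 1 := ⟨k - 1, by have : rank (.ex r C) = rank C + 1 := rfl; omega⟩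
    have hm : rank C ≤ m := by have : rank (.ex r C) = rank C + 1 := rfl; omega
    rw [mem_chi_succ] at h
    show (∃ y, (x, y) ∈ J.ir r ∧ y ∈ J.eval C) ↔ (∃ b, (a, b) ∈ I.ir r ∧ b ∈ I.eval C)
    constructor
    · rintro ⟨y, hy, hyC⟩
      obtain ⟨b, hb, hyb⟩ := (h.2 r).2 y hy
      exact ⟨b, hb, (ihC m hm J y b hyb).1 hyC⟩
    · rintro ⟨b, hb, hbC⟩
      obtain ⟨y, hy, hyb⟩ := (h.2 r).1 b hb
      exact ⟨y, hy, (ihC m hm J y b hyb).2 hbC⟩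

/-- Propagation: if `J` satisfies all level-`n` step axioms, then the step holds at all
levels `≥ n`. -/
lemma chi_step (n : ℕ) (J : ALCModel NC NR)
    (hJ : ∀ (a : I.Δ) (x : J.Δ), x ∈ J.eval (chi I n a) → x ∈ J.eval (chi I (n+1) a)) :
    ∀ (k : ℕ) (a : I.Δ) (x : J.Δ),
      x ∈ J.eval (chi I (n+k) a) → x ∈ J.eval (chi I (n+k+1) a) := by
  intro k
  induction k with
  | zero => exact fun a x h => hJ a x h
  | succ k ih =>
    intro a x h
    rw [show n + (k+1) = (n+k) + 1 from rfl, mem_chi_succ] at h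
    rw [show n + (k+1) + 1 = (n+k+1) + 1 from rfl, mem_chi_succ]
    refine ⟨h.1, fun r => ⟨?_, ?_⟩⟩
    · intro b hb
      obtain ⟨y, hy, hyb⟩ := (h.2 r).1 b hb
      exact ⟨y, hy, ih b y hyb⟩
    · intro y hy
      obtain ⟨b, hb, hyb⟩ := (h.2 r).2 y hy
      exact ⟨b, hb, ih b y hyb⟩

lemma chi_prop (n : ℕ) (J : ALCModel NC NR)
    (hJ : ∀ (a : I.Δ) (x : J.Δ), x ∈ J.eval (chi I n a) → x ∈ J.eval (chi I (n+1) a)) :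
    ∀ (k : ℕ) (a : I.Δ) (x : J.Δ),
      x ∈ J.eval (chi I n a) → x ∈ J.eval (chi I (n+k) a) := by
  intro k
  induction k with
  | zero => exact fun a x h => h
  | succ k ih =>
    intro a x h
    exact chi_step I n J hJ k a x (ih a x h)

/-- Stabilization in the finite model `I`. -/
lemma chi_stab : ∃ n : ℕ, ∀ (a x : I.Δ),
    x ∈ I.eval (chi I n a) → x ∈ I.eval (chi I (n+1) a) := by
  have hfin : Finite (Set (I.Δ × I.Δ)) := by infer_instance
  obtain ⟨i, j, hij, heq⟩ := Finite.exists_ne_map_eq_of_infinite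
    (fun k : ℕ => ({p | p.1 ∈ I.eval (chi I k p.2)} : Set (I.Δ × I.Δ)))
  wlog hlt : i < j generalizing i j
  · exact this j i (Ne.symm hij) heq.symm (by omega)
  refine ⟨i, fun a x hx => ?_⟩
  have hx' : (x, a) ∈ ({p | p.1 ∈ I.eval (chi I j p.2)} : Set (I.Δ × I.Δ)) := by
    rw [← heq]; exact hx
  exact chi_mono'' I I x a (by omega) hx'

end Aux

theorem finite_basis_for_finite_model {NC NR : Type} [Finite NC] [Finite NR]
    (I : ALCModel NC NR) [Finite I.Δ] :
    ∃ T : Set (ALCConcept NC NR × ALCConcept NC NR), T.Finite ∧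
      (∀ φ ∈ T, I.Sat φ.1 φ.2) ∧
      (∀ C D : ALCConcept NC NR, I.Sat C D → Consequence T C D) := by
  haveI : Fintype NC := Fintype.ofFinite NC
  haveI : Fintype NR := Fintype.ofFinite NR
  haveI : Fintype I.Δ := Fintype.ofFinite I.Δ
  obtain ⟨n, hn⟩ := chi_stab I
  set S : ALCConcept NC NR :=
    supL ((Finset.univ : Finset I.Δ).toList.map fun a => chi I n a) with hS
  refine ⟨insert ((.top : ALCConcept NC NR), S)
    (Set.range fun a : I.Δ => (chi I n a, chi I (n+1) a)), ?_, ?_, ?_⟩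
  · exact (Set.finite_range _).insert _
  · rintro φ (rfl | ⟨a, rfl⟩)
    · intro x _
      exact (mem_eval_supL I _ x).2 ⟨chi I n x,
        List.mem_map.2 ⟨x, by simp, rfl⟩, chi_refl I n x⟩
    · intro x hx
      exact hn a x hx
  · intro C D hCD J hJ x hx
    have htop : J.Sat .top S := hJ _ (Set.mem_insert _ _)
    have hstep : ∀ (a : I.Δ) (y : J.Δ),
        y ∈ J.eval (chi I n a) → y ∈ J.eval (chi I (n+1) a) := by
      intro a y hy
      exact hJ _ (Set.mem_insert_of_mem _ ⟨a, rfl⟩) hy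
    have hxS : x ∈ J.eval S := htop (by show x ∈ Set.univ; trivial)
    obtain ⟨E, hE, hxE⟩ := (mem_eval_supL J _ x).1 hxS
    obtain ⟨a, -, rfl⟩ := List.mem_map.1 hE
    set m : ℕ := max (rank C) (rank D) with hm
    have hxk : x ∈ J.eval (chi I (n + m) a) := chi_prop I n J hstep m a x hxE
    have hC : x ∈ J.eval C ↔ a ∈ I.eval C :=
      chi_agree I C (n + m) (by omega) J x a hxk
    have hD : x ∈ J.eval D ↔ a ∈ I.eval D :=
      chi_agree I D (n + m) (by omega) J x a hxk
    exact hD.2 (hCD (hC.1 hx))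
end

section
/- Let I be a finite Σ-model satisfying the separation condition: for all a, b ∈ Δ^I, if {c ∈ N_C | a ∈ c^I} = {c ∈ N_C | b ∈ c^I} and a ≠ b, then there exists r ∈ N_R such that a ∈ r^I_1 and b ∉ r^I_1 or vice versa, where r^I_1 = {x | ∃y, (x,y) ∈ r^I}. Then for every subset S ⊆ Δ^I there exists an ALC concept description C_S with C_S^I = S. -/
section Aux
variable {NC NR : Type} (I : ALCModel NC NR)

def bigSup : List (ALCConcept NC NR) → ALCConcept NC NR
  | [] => .bot
  | C :: l => .sup C (bigSup l)

def bigInf : List (ALCConcept NC NR) → ALCConcept NC NR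
  | [] => .top
  | C :: l => .inf C (bigInf l)

lemma eval_bigSup (l : List (ALCConcept NC NR)) :
    I.eval (bigSup l) = ⋃ C ∈ l, I.eval C := by
  induction l with
  | nil => simp [bigSup, ALCModel.eval]
  | cons C l ih => simp [bigSup, ALCModel.eval, ih]

lemma eval_bigInf (l : List (ALCConcept NC NR)) :
    I.eval (bigInf l) = ⋂ C ∈ l, I.eval C := by
  induction l with
  | nil => simp [bigInf, ALCModel.eval]
  | cons C l ih => simp [bigInf, ALCModel.eval, ih]

end Aux

lemma separating {NC NR : Type} (I : ALCModel NC NR)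
    (hsep : ∀ a b : I.Δ, a ≠ b →
      {c : NC | a ∈ I.ic c} = {c : NC | b ∈ I.ic c} →
      ∃ r : NR,
        (a ∈ {x : I.Δ | ∃ y, (x, y) ∈ I.ir r} ∧ b ∉ {x : I.Δ | ∃ y, (x, y) ∈ I.ir r}) ∨
        (b ∈ {x : I.Δ | ∃ y, (x, y) ∈ I.ir r} ∧ a ∉ {x : I.Δ | ∃ y, (x, y) ∈ I.ir r})) :
    ∀ a b : I.Δ, a ≠ b → ∃ C : ALCConcept NC NR, a ∈ I.eval C ∧ b ∉ I.eval C := by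
  intro a b hab
  by_cases hc : {c : NC | a ∈ I.ic c} = {c : NC | b ∈ I.ic c}
  · obtain ⟨r, h⟩ := hsep a b hab hc
    rcases h with ⟨ha, hb⟩ | ⟨hb, ha⟩
    · exact ⟨.ex r .top, by
        obtain ⟨y, hy⟩ := ha
        exact ⟨⟨y, hy, trivial⟩, fun ⟨y, hy, _⟩ => hb ⟨y, hy⟩⟩⟩
    · exact ⟨.compl (.ex r .top), by
        constructor
        · intro ⟨y, hy, _⟩; exact ha ⟨y, hy⟩
        · simp only [ALCModel.eval, Set.mem_compl_iff, not_not]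
          obtain ⟨y, hy⟩ := hb
          exact ⟨y, hy, trivial⟩⟩
  · have : ∃ c : NC, (a ∈ I.ic c ∧ b ∉ I.ic c) ∨ (b ∈ I.ic c ∧ a ∉ I.ic c) := by
      by_contra h
      push_neg at h
      apply hc
      ext c
      have := h c
      simp only [Set.mem_setOf_eq]
      tauto
    obtain ⟨c, h⟩ := this
    rcases h with ⟨ha, hb⟩ | ⟨hb, ha⟩
    · exact ⟨.atom c, ha, hb⟩
    · exact ⟨.compl (.atom c), ha, by simpa [ALCModel.eval] using hb⟩

theorem every_subset_definable {NC NR : Type} [Nonempty NC]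
    (I : ALCModel NC NR) [Finite I.Δ]
    (hsep : ∀ a b : I.Δ, a ≠ b →
      {c : NC | a ∈ I.ic c} = {c : NC | b ∈ I.ic c} →
      ∃ r : NR,
        (a ∈ {x : I.Δ | ∃ y, (x, y) ∈ I.ir r} ∧ b ∉ {x : I.Δ | ∃ y, (x, y) ∈ I.ir r}) ∨
        (b ∈ {x : I.Δ | ∃ y, (x, y) ∈ I.ir r} ∧ a ∉ {x : I.Δ | ∃ y, (x, y) ∈ I.ir r})) :
    ∀ S : Set I.Δ, ∃ C : ALCConcept NC NR, I.eval C = S := by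
  classical
  haveI : Fintype I.Δ := Fintype.ofFinite I.Δ
  intro S
  obtain ⟨f, hf⟩ : ∃ f : I.Δ → I.Δ → ALCConcept NC NR,
      ∀ a b, a ≠ b → a ∈ I.eval (f a b) ∧ b ∉ I.eval (f a b) := by
    have h := separating I hsep
    refine ⟨fun a b => if hab : a = b then .top else Classical.choose (h a b hab), ?_⟩
    intro a b hab
    simp only [dif_neg hab]
    exact Classical.choose_spec (h a b hab)
  set D : I.Δ → ALCConcept NC NR := fun a =>
    bigInf ((Sᶜ.toFinset.toList).map (f a)) with hD
  have hDmem : ∀ a ∈ S, a ∈ I.eval (D a) := by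
    intro a ha
    rw [hD, eval_bigInf]
    simp only [Set.mem_iInter, List.mem_map, Finset.mem_toList, Set.mem_toFinset]
    rintro C ⟨b, hb, rfl⟩
    exact (hf a b (fun h => hb (h ▸ ha))).1
  have hDsub : ∀ a ∈ S, I.eval (D a) ⊆ S := by
    intro a ha x hx
    by_contra hxS
    rw [hD, eval_bigInf] at hx
    simp only [Set.mem_iInter, List.mem_map, Finset.mem_toList, Set.mem_toFinset] at hx
    exact (hf a x (fun h => hxS (h ▸ ha))).2 (hx _ ⟨x, hxS, rfl⟩)
  refine ⟨bigSup ((S.toFinset.toList).map D), ?_⟩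
  rw [eval_bigSup]
  ext x
  simp only [Set.mem_iUnion, List.mem_map, Finset.mem_toList, Set.mem_toFinset]
  constructor
  · rintro ⟨C, ⟨a, ha, rfl⟩, hx⟩
    exact hDsub a ha hx
  · intro hx
    exact ⟨D x, ⟨x, hx, rfl⟩, hDmem x hx⟩
end

section
/- Every GCI class of Σ-models is a complete covariety: if M = {I | I ⊨ T} for some set T of GCIs, then M is closed under morphism domains, homomorphic images (surjective morphism targets), and coproducts. -/
/-- Coproduct (disjoint union) of a family of models. -/
def Coproduct {NC NR Λ : Type} [Nonempty Λ] (F : Λ → ALCModel NC NR) : ALCModel NC NR where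
  Δ := Σ i, (F i).Δ
  nonempty := ⟨⟨Classical.arbitrary Λ, (F _).nonempty.some⟩⟩
  ic c := {p | p.2 ∈ (F p.1).ic c}
  ir r := {p | ∃ (i : Λ) (a b : (F i).Δ), (a, b) ∈ (F i).ir r ∧ p.1 = ⟨i, a⟩ ∧ p.2 = ⟨i, b⟩}

/-- Closure under morphism domains, homomorphic images and coproducts. -/
def IsCompleteCovariety {NC NR : Type} (Cl : Set (ALCModel NC NR)) : Prop :=
  (∀ I I' : ALCModel NC NR, I' ∈ Cl → (∃ μ : I.Δ → I'.Δ, IsMorphism I I' μ) → I ∈ Cl) ∧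
  (∀ I I' : ALCModel NC NR, I ∈ Cl →
    (∃ μ : I.Δ → I'.Δ, IsMorphism I I' μ ∧ Function.Surjective μ) → I' ∈ Cl) ∧
  (∀ (Λ : Type) (_ : Nonempty Λ) (F : Λ → ALCModel NC NR),
    (∀ i, F i ∈ Cl) → Coproduct F ∈ Cl)

lemma morphism_eval_iff {NC NR : Type} {I I' : ALCModel NC NR} {μ : I.Δ → I'.Δ}
    (h : IsMorphism I I' μ) (C : ALCConcept NC NR) (a : I.Δ) :
    a ∈ I.eval C ↔ μ a ∈ I'.eval C := by
  induction C generalizing a with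
  | bot => simp [ALCModel.eval]
  | top => simp [ALCModel.eval]
  | atom c => exact h.1 c a
  | inf C D ihC ihD => simp [ALCModel.eval, Set.mem_inter_iff, ihC, ihD]
  | sup C D ihC ihD => simp [ALCModel.eval, Set.mem_union, ihC, ihD]
  | compl C ihC => simp [ALCModel.eval, ihC]
  | all r C ihC =>
    simp only [ALCModel.eval, Set.mem_setOf_eq]
    constructor
    · intro hx y hy
      obtain ⟨b, hb, rfl⟩ := h.2.2 r a y hy
      exact (ihC b).mp (hx b hb)
    · intro hx y hy
      exact (ihC y).mpr (hx (μ y) (h.2.1 r a y hy))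
  | ex r C ihC =>
    simp only [ALCModel.eval, Set.mem_setOf_eq]
    constructor
    · rintro ⟨y, hy, hyC⟩
      exact ⟨μ y, h.2.1 r a y hy, (ihC y).mp hyC⟩
    · rintro ⟨y, hy, hyC⟩
      obtain ⟨b, hb, rfl⟩ := h.2.2 r a y hy
      exact ⟨b, hb, (ihC b).mpr hyC⟩

lemma coproduct_incl_morphism {NC NR Λ : Type} [Nonempty Λ] (F : Λ → ALCModel NC NR)
    (i : Λ) : IsMorphism (F i) (Coproduct F) (fun a => ⟨i, a⟩) := by
  refine ⟨fun c a => Iff.rfl, fun r a b hab => ⟨i, a, b, hab, rfl, rfl⟩, ?_⟩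
  rintro r a ⟨j, b⟩ ⟨i', a', b', hab, h1, h2⟩
  cases h1; cases h2
  exact ⟨b', hab, rfl⟩

theorem gci_class_is_complete_covariety {NC NR : Type}
    (T : Set (ALCConcept NC NR × ALCConcept NC NR)) :
    IsCompleteCovariety {I : ALCModel NC NR | ∀ φ ∈ T, I.Sat φ.1 φ.2} := by
  refine ⟨?_, ?_, ?_⟩
  · rintro I I' hI' ⟨μ, hμ⟩ φ hφ a ha
    exact (morphism_eval_iff hμ φ.2 a).mpr (hI' φ hφ ((morphism_eval_iff hμ φ.1 a).mp ha))
  · rintro I I' hI ⟨μ, hμ, hsurj⟩ φ hφ a' ha'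
    obtain ⟨a, rfl⟩ := hsurj a'
    exact (morphism_eval_iff hμ φ.2 a).mp (hI φ hφ ((morphism_eval_iff hμ φ.1 a).mpr ha'))
  · rintro Λ hΛ F hF φ hφ ⟨i, a⟩ ha
    exact (morphism_eval_iff (coproduct_incl_morphism F i) φ.2 a).mp
      (hF i φ hφ ((morphism_eval_iff (coproduct_incl_morphism F i) φ.1 a).mpr ha))
end

section
/- For any finite set K of Σ-models, the class of models satisfying GCI(K) equals the class of models satisfying GCI({Σ_{I ∈ K} I}), i.e. a GCI holds in every model of K if and only if it holds in the coproduct of the models in K. -/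
/-! Each component embeds into the coproduct by a functional bisimulation, and ALC concepts are
invariant under functional bisimulations. So a GCI holds in the coproduct iff it holds in every
component: the family and its coproduct have the same GCIs, hence the same class of models. -/

theorem IsMorphism.mem_eval_iff {NC NR : Type} {I I' : ALCModel NC NR} {μ : I.Δ → I'.Δ}
    (hμ : IsMorphism I I' μ) (C : ALCConcept NC NR) (a : I.Δ) :
    a ∈ I.eval C ↔ μ a ∈ I'.eval C := by
  obtain ⟨hatom, hforth, hback⟩ := hμ
  induction C generalizing a with
  | bot => exact Iff.rfl
  | top => exact Iff.rfl
  | atom c => exact hatom c a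
  | inf C D ihC ihD => exact and_congr (ihC a) (ihD a)
  | sup C D ihC ihD => exact or_congr (ihC a) (ihD a)
  | compl C ihC => exact not_congr (ihC a)
  | all r C ihC =>
    constructor
    · intro h y' hy'
      obtain ⟨b, hab, rfl⟩ := hback r a y' hy'
      exact (ihC b).mp (h b hab)
    · intro h b hab
      exact (ihC b).mpr (h (μ b) (hforth r a b hab))
  | ex r C ihC =>
    constructor
    · rintro ⟨b, hab, hb⟩
      exact ⟨μ b, hforth r a b hab, (ihC b).mp hb⟩
    · rintro ⟨y', hy', hy'C⟩
      obtain ⟨b, hab, rfl⟩ := hback r a y' hy'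
      exact ⟨b, hab, (ihC b).mpr hy'C⟩

theorem Coproduct.isMorphism_mk {NC NR Λ : Type} [Nonempty Λ] (F : Λ → ALCModel NC NR) (i : Λ) :
    IsMorphism (F i) (Coproduct F) (Sigma.mk (β := fun j => (F j).Δ) i) := by
  refine ⟨fun c a => Iff.rfl, fun r a b hab => ⟨i, a, b, hab, rfl, rfl⟩, ?_⟩
  rintro r a - ⟨j, x, b, hxb, hax, rfl⟩
  cases hax
  exact ⟨b, hxb, rfl⟩

theorem Coproduct.sat_iff {NC NR Λ : Type} [Nonempty Λ] (F : Λ → ALCModel NC NR)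
    (C D : ALCConcept NC NR) :
    (Coproduct F).Sat C D ↔ ∀ i, (F i).Sat C D := by
  have hmem (E : ALCConcept NC NR) (i : Λ) (a : (F i).Δ) :=
    (Coproduct.isMorphism_mk F i).mem_eval_iff E a
  constructor
  · intro h i a ha
    exact (hmem D i a).mpr (h ((hmem C i a).mp ha))
  · rintro h ⟨i, a⟩ ha
    exact (hmem D i a).mp (h i ((hmem C i a).mpr ha))

theorem gci_of_family_eq_gci_of_coproduct_general {NC NR Λ : Type} [Nonempty Λ]
    (F : Λ → ALCModel NC NR) :
    {J : ALCModel NC NR | ∀ C D : ALCConcept NC NR, (∀ i : Λ, (F i).Sat C D) → J.Sat C D} =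
    {J : ALCModel NC NR | ∀ C D : ALCConcept NC NR, (Coproduct F).Sat C D → J.Sat C D} := by
  simp only [Coproduct.sat_iff]

theorem gci_of_family_eq_gci_of_coproduct {NC NR Λ : Type} [Finite Λ] [Nonempty Λ]
    (F : Λ → ALCModel NC NR) :
    {J : ALCModel NC NR | ∀ C D : ALCConcept NC NR, (∀ i : Λ, (F i).Sat C D) → J.Sat C D} =
    {J : ALCModel NC NR | ∀ C D : ALCConcept NC NR, (Coproduct F).Sat C D → J.Sat C D} :=
  gci_of_family_eq_gci_of_coproduct_general F
end

section
/- Let Σ be a finite signature and K a finite set of finite Σ-models. Then GCI(Cv(K)), the set of GCIs holding in all models of the complete covariety generated by K, is finitely based: there is a finite set T of GCIs sound and complete for Cv(K). -/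
/-- The complete covariety generated by a class `K`. -/
def CvGen {NC NR : Type} (K : Set (ALCModel NC NR)) : Set (ALCModel NC NR) :=
  ⋂₀ {Cl : Set (ALCModel NC NR) | K ⊆ Cl ∧ IsCompleteCovariety Cl}

/-!
The elements of the finitely many finite models in `K` realise finitely many rank-`k` types for
each `k`, and agreement of rank-`k` types is an antitone chain of relations on a finite set, so it
stabilises: for some `n`, the rank-`n` type of such an element determines its rank-`(n + 1)` type.
Using characteristic concepts of types, finitely many GCIs express this, together with the GCI
saying that every element realises one of these rank-`n` types. They hold in `K`, hence in
`Cv(K)`. In a model of them, agreement at rank `n` with an element of `K` is a bisimulation, so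
every element satisfies the same concepts as some element of `K`, which gives completeness.
-/

section

variable {NC NR : Type}

namespace ALCConcept

def rank : ALCConcept NC NR → ℕ
  | bot | top | atom _ => 0
  | inf C D | sup C D => max C.rank D.rank
  | compl C => C.rank
  | all _ C | ex _ C => C.rank + 1

noncomputable def finInf {α : Type*} [Finite α] (f : α → ALCConcept NC NR) : ALCConcept NC NR :=
  ((@Finset.univ α (Fintype.ofFinite α)).toList.map f).foldr inf top

noncomputable def finSup {α : Type*} [Finite α] (f : α → ALCConcept NC NR) : ALCConcept NC NR :=
  ((@Finset.univ α (Fintype.ofFinite α)).toList.map f).foldr sup bot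

noncomputable def atomsChar [Finite NC] (A : Set NC) : ALCConcept NC NR :=
  inf (finInf fun c : A => atom c) (finInf fun c : ↥Aᶜ => compl (atom c))

end ALCConcept

namespace ALCModel

open ALCConcept

variable (I : ALCModel NC NR)

def atoms (x : I.Δ) : Set NC := {c | x ∈ I.ic c}

def successors (r : NR) (x : I.Δ) : Set I.Δ := {y | (x, y) ∈ I.ir r}

variable {I}

lemma mem_eval_foldr_inf {x : I.Δ} (l : List (ALCConcept NC NR)) :
    x ∈ I.eval (l.foldr inf top) ↔ ∀ C ∈ l, x ∈ I.eval C := by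
  induction l with
  | nil => simp [eval]
  | cons C l ih => simp [eval, ih]

lemma mem_eval_foldr_sup {x : I.Δ} (l : List (ALCConcept NC NR)) :
    x ∈ I.eval (l.foldr sup bot) ↔ ∃ C ∈ l, x ∈ I.eval C := by
  induction l with
  | nil => simp [eval]
  | cons C l ih => simp [eval, ih]

@[simp]
lemma mem_eval_finInf {α : Type*} [Finite α] {f : α → ALCConcept NC NR} {x : I.Δ} :
    x ∈ I.eval (finInf f) ↔ ∀ a, x ∈ I.eval (f a) := by
  simp [finInf, mem_eval_foldr_inf]

@[simp]
lemma mem_eval_finSup {α : Type*} [Finite α] {f : α → ALCConcept NC NR} {x : I.Δ} :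
    x ∈ I.eval (finSup f) ↔ ∃ a, x ∈ I.eval (f a) := by
  simp [finSup, mem_eval_foldr_sup]

lemma mem_eval_atomsChar [Finite NC] {A : Set NC} {x : I.Δ} :
    x ∈ I.eval (atomsChar A) ↔ I.atoms x = A := by
  simp only [atomsChar, eval, Set.mem_inter_iff, mem_eval_finInf, Set.mem_compl_iff,
    Subtype.forall, Set.ext_iff, atoms, Set.mem_ofPred_eq]
  exact ⟨fun h c => ⟨fun hc => by_contra fun hA => h.2 c hA hc, h.1 c⟩,
    fun h => ⟨fun c hc => (h c).2 hc, fun c hA hc => hA ((h c).1 hc)⟩⟩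

end ALCModel

/-- A rank-`(k + 1)` type records the atoms of an element and, for each role, the set of rank-`k`
types of its successors. -/
def RankType (NC NR : Type) : ℕ → Type
  | 0 => Set NC
  | k + 1 => Set NC × (NR → Set (RankType NC NR k))

namespace RankType

instance instFinite [Finite NC] [Finite NR] : ∀ k, Finite (RankType NC NR k)
  | 0 => inferInstanceAs (Finite (Set NC))
  | k + 1 =>
    have := instFinite k
    inferInstanceAs (Finite (Set NC × (NR → Set (RankType NC NR k))))

def restrict : ∀ k, RankType NC NR (k + 1) → RankType NC NR k
  | 0, t => t.1
  | k + 1, t => (t.1, fun r => restrict k '' t.2 r)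

open ALCConcept in
noncomputable def toConcept [Finite NC] [Finite NR] : ∀ k, RankType NC NR k → ALCConcept NC NR
  | 0, A => atomsChar A
  | k + 1, t => inf (atomsChar t.1) <| finInf fun r =>
      inf (finInf fun s : t.2 r => ex r (toConcept k s))
        (all r (finSup fun s : t.2 r => toConcept k s))

end RankType

namespace ALCModel

variable {I J : ALCModel NC NR}

variable (I) in
def rankType : ∀ k, I.Δ → RankType NC NR k
  | 0, x => I.atoms x
  | k + 1, x => ((I.atoms x, fun r => rankType k '' I.successors r x) :
      Set NC × (NR → Set (RankType NC NR k)))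

lemma restrict_rankType (k : ℕ) (x : I.Δ) :
    (I.rankType (k + 1) x).restrict k = I.rankType k x := by
  induction k generalizing x with
  | zero => rfl
  | succ k ih =>
    refine Prod.ext rfl (funext fun r => ?_)
    show RankType.restrict k '' (I.rankType (k + 1) '' _) = _
    simp only [Set.image_image, ih]
    rfl

lemma rankType_eq_of_le {k l : ℕ} (hkl : k ≤ l) {x : I.Δ} {y : J.Δ}
    (h : I.rankType l x = J.rankType l y) : I.rankType k x = J.rankType k y := by
  induction l, hkl using Nat.le_induction with
  | base => exact h
  | succ l _ ih => exact ih (by rw [← restrict_rankType, h, restrict_rankType])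

lemma atoms_eq_of_rankType_eq {k : ℕ} {x : I.Δ} {y : J.Δ}
    (h : I.rankType k x = J.rankType k y) : I.atoms x = J.atoms y :=
  rankType_eq_of_le k.zero_le h

lemma rankType_succ_eq_iff {k : ℕ} {x : I.Δ} {t : RankType NC NR (k + 1)} :
    I.rankType (k + 1) x = t ↔ I.atoms x = t.1 ∧ ∀ r, I.rankType k '' I.successors r x = t.2 r :=
  Prod.ext_iff.trans (and_congr Iff.rfl funext_iff)

lemma exists_successor_rankType_eq {k : ℕ} {x x' : I.Δ} {y : J.Δ} {r : NR}
    (h : I.rankType (k + 1) x = J.rankType (k + 1) y) (hx' : x' ∈ I.successors r x) :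
    ∃ y' ∈ J.successors r y, J.rankType k y' = I.rankType k x' := by
  show I.rankType k x' ∈ (J.rankType (k + 1) y).2 r
  rw [← (rankType_succ_eq_iff.1 h).2 r]
  exact Set.mem_image_of_mem _ hx'

lemma mem_eval_of_rankType_eq (C : ALCConcept NC NR) {k : ℕ} (hk : C.rank ≤ k) {x : I.Δ}
    {y : J.Δ} (h : I.rankType k x = J.rankType k y) (hx : x ∈ I.eval C) : y ∈ J.eval C := by
  induction C generalizing k I J with
  | bot => exact absurd hx (Set.notMem_empty x)
  | top => exact Set.mem_univ y
  | atom c => exact (Set.ext_iff.1 (atoms_eq_of_rankType_eq h) c).1 hx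
  | inf C D ihC ihD =>
    exact ⟨ihC (le_of_max_le_left hk) h hx.1, ihD (le_of_max_le_right hk) h hx.2⟩
  | sup C D ihC ihD =>
    exact hx.imp (ihC (le_of_max_le_left hk) h) (ihD (le_of_max_le_right hk) h)
  | compl C ihC => exact fun hy => hx (ihC hk h.symm hy)
  | all r C ihC =>
    cases k with
    | zero => exact absurd hk (Nat.not_succ_le_zero _)
    | succ m =>
      intro y' hy'
      obtain ⟨x', hx', hxy⟩ := exists_successor_rankType_eq h.symm hy'
      exact ihC (Nat.le_of_succ_le_succ hk) hxy (hx x' hx')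
  | ex r C ihC =>
    cases k with
    | zero => exact absurd hk (Nat.not_succ_le_zero _)
    | succ m =>
      obtain ⟨x', hx', hCx'⟩ := hx
      obtain ⟨y', hy', hxy⟩ := exists_successor_rankType_eq h hx'
      exact ⟨y', hy', ihC (Nat.le_of_succ_le_succ hk) hxy.symm hCx'⟩

lemma mem_eval_iff_of_rankType_eq {x : I.Δ} {y : J.Δ}
    (h : ∀ k, I.rankType k x = J.rankType k y) (C : ALCConcept NC NR) :
    x ∈ I.eval C ↔ y ∈ J.eval C :=
  ⟨mem_eval_of_rankType_eq C le_rfl (h _), mem_eval_of_rankType_eq C le_rfl (h _).symm⟩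

lemma mem_eval_toConcept [Finite NC] [Finite NR] {k : ℕ} {t : RankType NC NR k} {x : I.Δ} :
    x ∈ I.eval (t.toConcept k) ↔ I.rankType k x = t := by
  induction k generalizing x with
  | zero => exact mem_eval_atomsChar
  | succ k ih =>
    obtain ⟨A, f⟩ := t
    simp only [RankType.toConcept, eval, Set.mem_inter_iff, mem_eval_atomsChar, mem_eval_finInf,
      mem_eval_finSup, Set.mem_ofPred_eq, ih]
    refine Iff.trans ?_ rankType_succ_eq_iff.symm
    refine and_congr Iff.rfl (forall_congr' fun r => ?_)
    rw [Set.Subset.antisymm_iff, Set.image_subset_iff, and_comm]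
    simp [Set.subset_def, successors]

structure IsBisimulation (I J : ALCModel NC NR) (Z : I.Δ → J.Δ → Prop) : Prop where
  atoms_eq : ∀ {x y}, Z x y → I.atoms x = J.atoms y
  forth : ∀ {r x y x'}, Z x y → x' ∈ I.successors r x → ∃ y' ∈ J.successors r y, Z x' y'
  back : ∀ {r x y y'}, Z x y → y' ∈ J.successors r y → ∃ x' ∈ I.successors r x, Z x' y'

lemma IsBisimulation.rankType_eq {Z : I.Δ → J.Δ → Prop} (hZ : IsBisimulation I J Z) {x : I.Δ}
    {y : J.Δ} (hxy : Z x y) (k : ℕ) : I.rankType k x = J.rankType k y := by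
  induction k generalizing x y with
  | zero => exact hZ.atoms_eq hxy
  | succ k ih =>
    refine rankType_succ_eq_iff.2 ⟨hZ.atoms_eq hxy, fun r => Set.Subset.antisymm ?_ ?_⟩
    · rintro _ ⟨x', hx', rfl⟩
      obtain ⟨y', hy', hZ'⟩ := hZ.forth hxy hx'
      exact ⟨y', hy', (ih hZ').symm⟩
    · rintro _ ⟨y', hy', rfl⟩
      obtain ⟨x', hx', hZ'⟩ := hZ.back hxy hy'
      exact ⟨x', hx', ih hZ'⟩

lemma rankType_eq_of_succ_determined {n : ℕ}
    (hstep : ∀ x y, I.rankType n x = J.rankType n y →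
      I.rankType (n + 1) x = J.rankType (n + 1) y)
    {x : I.Δ} {y : J.Δ} (h : I.rankType n x = J.rankType n y) (k : ℕ) :
    I.rankType k x = J.rankType k y := by
  refine IsBisimulation.rankType_eq (Z := fun x y => I.rankType n x = J.rankType n y)
    ⟨atoms_eq_of_rankType_eq, fun hxy hx' => ?_, fun hxy hy' => ?_⟩ h k
  · obtain ⟨y', hy', e⟩ := exists_successor_rankType_eq (hstep _ _ hxy) hx'
    exact ⟨y', hy', e.symm⟩
  · exact exists_successor_rankType_eq (hstep _ _ hxy).symm hy'

end ALCModel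

namespace IsMorphism

variable {I I' : ALCModel NC NR} {μ : I.Δ → I'.Δ}

lemma isBisimulation (hμ : IsMorphism I I' μ) : I.IsBisimulation I' fun x y => μ x = y where
  atoms_eq := by
    rintro x _ rfl
    exact Set.ext (hμ.1 · x)
  forth := by
    rintro r x _ x' rfl hx'
    exact ⟨μ x', hμ.2.1 r x x' hx', rfl⟩
  back := by
    rintro r x _ y' rfl hy'
    exact hμ.2.2 r x y' hy'

lemma mem_eval_iff_s16 (hμ : IsMorphism I I' μ) (C : ALCConcept NC NR) (x : I.Δ) :
    x ∈ I.eval C ↔ μ x ∈ I'.eval C :=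
  ALCModel.mem_eval_iff_of_rankType_eq (hμ.isBisimulation.rankType_eq rfl) C

lemma sat_of_sat (hμ : IsMorphism I I' μ) {C D : ALCConcept NC NR} (h : I'.Sat C D) :
    I.Sat C D :=
  fun x hx => (hμ.mem_eval_iff_s16 D x).2 (h ((hμ.mem_eval_iff_s16 C x).1 hx))

lemma sat_of_sat_of_surjective (hμ : IsMorphism I I' μ) (hsurj : Function.Surjective μ)
    {C D : ALCConcept NC NR} (h : I.Sat C D) : I'.Sat C D := by
  intro y hy
  obtain ⟨x, rfl⟩ := hsurj y
  exact (hμ.mem_eval_iff_s16 D x).1 (h ((hμ.mem_eval_iff_s16 C x).2 hy))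

end IsMorphism

section Coproduct

variable {Λ : Type} [Nonempty Λ] (F : Λ → ALCModel NC NR)

lemma isMorphism_coproduct_mk (i : Λ) : IsMorphism (F i) (Coproduct F) (fun a => ⟨i, a⟩) := by
  refine ⟨fun c a => Iff.rfl, fun r a b hab => ⟨i, a, b, hab, rfl, rfl⟩, ?_⟩
  rintro r a _ ⟨_, _, b, hab, he, rfl⟩
  cases he
  exact ⟨b, hab, rfl⟩

lemma coproduct_sat {C D : ALCConcept NC NR} (h : ∀ i, (F i).Sat C D) :
    (Coproduct F).Sat C D := by
  rintro ⟨i, a⟩ ha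
  have hmk := isMorphism_coproduct_mk F i
  exact (hmk.mem_eval_iff_s16 D a).1 (h i ((hmk.mem_eval_iff_s16 C a).2 ha))

end Coproduct

lemma isCompleteCovariety_setOf_sat (C D : ALCConcept NC NR) :
    IsCompleteCovariety {I : ALCModel NC NR | I.Sat C D} :=
  ⟨fun _ _ h ⟨_, hμ⟩ => hμ.sat_of_sat h,
    fun _ _ h ⟨_, hμ, hsurj⟩ => hμ.sat_of_sat_of_surjective hsurj h,
    fun _ _ F h => coproduct_sat F h⟩

lemma subset_cvGen (K : Set (ALCModel NC NR)) : K ⊆ CvGen K :=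
  fun _ hI => Set.mem_sInter.2 fun _ hCl => hCl.1 hI

lemma sat_of_mem_cvGen {K : Set (ALCModel NC NR)} {C D : ALCConcept NC NR}
    (h : ∀ I ∈ K, I.Sat C D) {I : ALCModel NC NR} (hI : I ∈ CvGen K) : I.Sat C D :=
  Set.mem_sInter.1 hI {J | J.Sat C D} ⟨h, isCompleteCovariety_setOf_sat C D⟩

section TypeAxioms

open ALCModel

variable {ι : Type*} (F : ι → ALCModel NC NR)

def IsRankTypeStable (n : ℕ) : Prop :=
  ∀ a b : Σ i, (F i).Δ, (F a.1).rankType n a.2 = (F b.1).rankType n b.2 →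
    (F a.1).rankType (n + 1) a.2 = (F b.1).rankType (n + 1) b.2

lemma exists_isRankTypeStable [Finite (Σ i, (F i).Δ)] : ∃ n, IsRankTypeStable F n := by
  let agree (k : ℕ) : Set ((Σ i, (F i).Δ) × (Σ i, (F i).Δ)) :=
    {p | (F p.1.1).rankType k p.1.2 = (F p.2.1).rankType k p.2.2}
  obtain ⟨n, hn⟩ := WellFoundedLT.antitone_chain_condition (f := agree)
    fun k l hkl p hp => rankType_eq_of_le hkl hp
  exact ⟨n, fun a b h => (hn (n + 1) n.le_succ).subset (show (a, b) ∈ agree n from h)⟩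

variable [Finite NC] [Finite NR] [Finite (Σ i, (F i).Δ)]

/-- Every rank-`n` type realised in `F` forces its rank-`(n + 1)` type, and every element has one
of the rank-`n` types realised in `F`. -/
noncomputable def typeAxioms (n : ℕ) : Set (ALCConcept NC NR × ALCConcept NC NR) :=
  Set.range (fun a : Σ i, (F i).Δ =>
      (((F a.1).rankType n a.2).toConcept n, ((F a.1).rankType (n + 1) a.2).toConcept (n + 1))) ∪
    {(.top, ALCConcept.finSup fun a : Σ i, (F i).Δ => ((F a.1).rankType n a.2).toConcept n)}

lemma typeAxioms_finite (n : ℕ) : (typeAxioms F n).Finite :=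
  (Set.finite_range _).union (Set.finite_singleton _)

lemma sat_typeAxioms {n : ℕ} (hn : IsRankTypeStable F n)
    {φ : ALCConcept NC NR × ALCConcept NC NR} (hφ : φ ∈ typeAxioms F n) (i : ι) :
    (F i).Sat φ.1 φ.2 := by
  rcases hφ with ⟨a, rfl⟩ | rfl
  · exact fun x hx => mem_eval_toConcept.2 (hn ⟨i, x⟩ a (mem_eval_toConcept.1 hx))
  · exact fun x _ => mem_eval_finSup.2 ⟨⟨i, x⟩, mem_eval_toConcept.2 rfl⟩

lemma exists_rankType_eq_of_sat_typeAxioms {n : ℕ} {J : ALCModel NC NR}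
    (hJ : ∀ φ ∈ typeAxioms F n, J.Sat φ.1 φ.2) (x : J.Δ) :
    ∃ a : Σ i, (F i).Δ, ∀ k, J.rankType k x = (F a.1).rankType k a.2 := by
  obtain ⟨a, ha⟩ := mem_eval_finSup.1 (hJ _ (Or.inr rfl) (Set.mem_univ x))
  refine ⟨a, rankType_eq_of_succ_determined (fun y b hyb => ?_) (mem_eval_toConcept.1 ha)⟩
  exact mem_eval_toConcept.1 (hJ _ (Or.inl ⟨⟨a.1, b⟩, rfl⟩) (mem_eval_toConcept.2 hyb))

end TypeAxioms

end

theorem finite_basis_for_finitely_generated_covariety {NC NR : Type}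
    [Finite NC] [Finite NR] (K : Set (ALCModel NC NR)) (hK : K.Finite)
    (hfin : ∀ I ∈ K, Finite I.Δ) :
    ∃ T : Set (ALCConcept NC NR × ALCConcept NC NR), T.Finite ∧
      (∀ φ ∈ T, ∀ I ∈ CvGen K, I.Sat φ.1 φ.2) ∧
      (∀ C D : ALCConcept NC NR, (∀ I ∈ CvGen K, I.Sat C D) → Consequence T C D) := by
  have : Finite K := hK.to_subtype
  have : ∀ I : K, Finite I.1.Δ := fun I => hfin I I.2
  let F : K → ALCModel NC NR := Subtype.val
  obtain ⟨n, hn⟩ := exists_isRankTypeStable F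
  refine ⟨typeAxioms F n, typeAxioms_finite F n, fun φ hφ I hI => ?_, fun C D hCD J hJ x hx => ?_⟩
  · exact sat_of_mem_cvGen (fun I hI => sat_typeAxioms F hn hφ ⟨I, hI⟩) hI
  · obtain ⟨⟨⟨I, hI⟩, y⟩, hxy⟩ := exists_rankType_eq_of_sat_typeAxioms F hJ x
    have hIC : I.Sat C D := hCD I (subset_cvGen K hI)
    exact (ALCModel.mem_eval_iff_of_rankType_eq hxy D).2
      (hIC ((ALCModel.mem_eval_iff_of_rankType_eq hxy C).1 hx))
end
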